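/- Suppose r ∈ L ⊗ L satisfies a·r ∈ Im(1⊗1 − τ) for all a ∈ L, where τ is the twist map and L acts diagonally by the adjoint action. Then r ∈ Im(1⊗1 − τ), i.e., r is antisymmetric. -/

import Mathlib

open Finsupp TensorProduct

/-- Bracket of the generalized loop Witt algebra `[L_{α,i},L_{β,j}] = (β−α)L_{α+β,i+j}`. -/
noncomputable def bk2 {F : Type*} [Field F] (Γ : AddSubgroup F) :
    ((Γ × ℤ) →₀ F) →ₗ[F] ((Γ × ℤ) →₀ F) →ₗ[F] ((Γ × ℤ) →₀ F) :=
  Finsupp.lsum F fun p => LinearMap.toSpanSingleton F _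
    (Finsupp.lsum F fun q =>
      (((q.1 : F) - (p.1 : F)) • Finsupp.lsingle (p.1 + q.1, p.2 + q.2) : F →ₗ[F] _))

/-- Diagonal adjoint action of `L` on `L ⊗ L`. -/
noncomputable def act {F : Type*} [Field F] (Γ : AddSubgroup F) (x : (Γ × ℤ) →₀ F) :
    (((Γ × ℤ) →₀ F) ⊗[F] ((Γ × ℤ) →₀ F)) →ₗ[F] (((Γ × ℤ) →₀ F) ⊗[F] ((Γ × ℤ) →₀ F)) :=
  LinearMap.rTensor _ (bk2 Γ x) + LinearMap.lTensor _ (bk2 Γ x)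

/-- The twist map `τ(u ⊗ v) = v ⊗ u`. -/
noncomputable def tw {F : Type*} [Field F] (Γ : AddSubgroup F) :
    (((Γ × ℤ) →₀ F) ⊗[F] ((Γ × ℤ) →₀ F)) →ₗ[F] (((Γ × ℤ) →₀ F) ⊗[F] ((Γ × ℤ) →₀ F)) :=
  (TensorProduct.comm F _ _).toLinearMap

/-- The image of the antisymmetrization map `Im(1⊗1 − τ)`, as a set. -/
noncomputable def antiSym {F : Type*} [Field F] (Γ : AddSubgroup F) :
    Set (((Γ × ℤ) →₀ F) ⊗[F] ((Γ × ℤ) →₀ F)) :=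
  Set.range fun u => u - tw Γ u

/-!
`r + τ r` is invariant under `L`, so it suffices that `L ⊗ L` has no nonzero invariants. Writing
an invariant `s = ∑ c(u, v) L_u ⊗ L_v`, the equation `L_p · s = 0` is a linear recurrence for `c`.
For `p = 0` it forces `c(u, v) = 0` unless `u₁ + v₁ = 0`; for `p = (0, m)` it then makes `c`
constant along `(u, v) ↦ (u + (0, m), v - (0, m))` when `u₁ ≠ 0`, which finite support only allows
if `c(u, v) = 0`; for `p = (γ, 0)` with `γ ≠ 0` it finally kills `c(u, v)` when `u₁ = 0`.
-/

section
variable {F : Type*} [Field F] {Γ : AddSubgroup F}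

/-- The coefficient of `L_{p+u} ⊗ L_{p+v}` in `L_p · ∑ c(u, v) L_u ⊗ L_v` vanishes for all `p`,
`u`, `v`. -/
def IsInvariantCoeffs (c : (Γ × ℤ) × (Γ × ℤ) →₀ F) : Prop :=
  ∀ p u v : Γ × ℤ, ((u.1 : F) - p.1) * c (u, p + v) + ((v.1 : F) - p.1) * c (p + u, v) = 0

namespace IsInvariantCoeffs

variable {c : (Γ × ℤ) × (Γ × ℤ) →₀ F}

theorem apply_eq_zero_of_add_ne_zero (hc : IsInvariantCoeffs c) {u v : Γ × ℤ}
    (huv : (u.1 : F) + v.1 ≠ 0) : c (u, v) = 0 := by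
  have h := hc 0 u v
  simp only [Prod.fst_zero, ZeroMemClass.coe_zero, sub_zero, zero_add] at h
  exact (mul_eq_zero.mp (by linear_combination h)).resolve_left huv

theorem apply_add_left_eq (hc : IsInvariantCoeffs c) {t u : Γ × ℤ} (ht : (t.1 : F) = 0)
    (hu : (u.1 : F) ≠ 0) (v : Γ × ℤ) : c (t + u, v) = c (u, t + v) := by
  by_cases huv : (u.1 : F) + v.1 = 0
  · have h := hc t u v
    rw [ht, show (v.1 : F) = -u.1 by linear_combination huv] at h
    exact (mul_left_cancel₀ hu (by linear_combination h)).symm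
  · rw [hc.apply_eq_zero_of_add_ne_zero, hc.apply_eq_zero_of_add_ne_zero] <;>
      simpa [ht] using huv

theorem apply_eq_zero_of_fst_ne_zero (hc : IsInvariantCoeffs c) {u : Γ × ℤ}
    (hu : (u.1 : F) ≠ 0) (v : Γ × ℤ) : c (u, v) = 0 := by
  by_contra hne
  let shift : ℤ → (Γ × ℤ) × (Γ × ℤ) := fun m => ((0, m) + u, v - (0, m))
  have hinj : Function.Injective shift := fun m m' h => by
    simpa [shift] using congrArg (fun w => w.1.2) h
  have hmem : ∀ m, shift m ∈ (c.support : Set _) := fun m => by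
    simpa [shift, hc.apply_add_left_eq (t := (0, m)) rfl hu] using hne
  exact Set.infinite_of_injective_forall_mem hinj hmem c.support.finite_toSet

theorem eq_zero (hc : IsInvariantCoeffs c) {γ : Γ} (hγ : γ ≠ 0) : c = 0 := by
  ext ⟨u, w⟩
  by_cases hu : (u.1 : F) = 0
  · have hγ' : (γ : F) ≠ 0 := by simpa using hγ
    have h := hc (γ, 0) u (w - (γ, 0))
    rw [hc.apply_eq_zero_of_fst_ne_zero (u := (γ, 0) + u) (by simpa [hu] using hγ'),
      hu, add_sub_cancel] at h
    simpa [hγ'] using h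
  · exact hc.apply_eq_zero_of_fst_ne_zero hu w

end IsInvariantCoeffs

theorem bk2_single_single (p q : Γ × ℤ) :
    bk2 Γ (single p 1) (single q 1) = single (p + q) ((q.1 : F) - p.1) := by
  simp only [bk2, coe_lsum, LinearMap.toSpanSingleton_apply, zero_smul, sum_single_index,
    one_smul, LinearMap.coe_smul, Pi.smul_apply, lsingle_apply, single_zero, smul_zero,
    smul_single, smul_eq_mul, mul_one, single_sub]
  rfl

theorem finsuppTensorFinsupp'_act_single_apply (p u v : Γ × ℤ)
    (s : ((Γ × ℤ) →₀ F) ⊗[F] ((Γ × ℤ) →₀ F)) :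
    finsuppTensorFinsupp' F _ _ (act Γ (single p 1) s) (p + u, p + v)
      = ((u.1 : F) - p.1) * finsuppTensorFinsupp' F _ _ s (u, p + v)
        + ((v.1 : F) - p.1) * finsuppTensorFinsupp' F _ _ s (p + u, v) := by
  let φ := (finsuppTensorFinsupp' F (Γ × ℤ) (Γ × ℤ)).toLinearMap
  have hcoeff : lapply (p + u, p + v) ∘ₗ φ ∘ₗ act Γ (single p 1)
      = ((u.1 : F) - p.1) • (lapply (u, p + v) ∘ₗ φ)
        + ((v.1 : F) - p.1) • (lapply (p + u, v) ∘ₗ φ) := by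
    ext q q'
    classical
    simp only [φ, act, LinearMap.coe_comp, Function.comp_apply, lsingle_apply,
      AlgebraTensorModule.curry_apply, LinearMap.restrictScalars_self, TensorProduct.curry_apply,
      LinearEquiv.coe_coe, LinearMap.add_apply, LinearMap.rTensor_tmul, bk2_single_single,
      single_sub, LinearMap.lTensor_tmul, map_add, lapply_apply,
      finsuppTensorFinsupp'_apply_apply, coe_sub, Pi.sub_apply, single_apply, add_right_inj,
      mul_ite, mul_one, mul_zero, ite_mul, one_mul, zero_mul, LinearMap.smul_apply,
      finsuppTensorFinsupp'_single_tmul_single, Prod.mk.injEq, smul_eq_mul]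
    grind
  simpa [φ] using LinearMap.congr_fun hcoeff s

theorem isInvariantCoeffs_of_forall_act_eq_zero {s : ((Γ × ℤ) →₀ F) ⊗[F] ((Γ × ℤ) →₀ F)}
    (hs : ∀ a, act Γ a s = 0) : IsInvariantCoeffs (finsuppTensorFinsupp' F _ _ s) := by
  intro p u v
  rw [← finsuppTensorFinsupp'_act_single_apply, hs, map_zero, Finsupp.zero_apply]

theorem eq_zero_of_forall_act_eq_zero (hΓ : Γ ≠ ⊥)
    {s : ((Γ × ℤ) →₀ F) ⊗[F] ((Γ × ℤ) →₀ F)} (hs : ∀ a, act Γ a s = 0) : s = 0 := by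
  obtain ⟨γ, hγ⟩ := AddSubgroup.ne_bot_iff_exists_ne_zero.mp hΓ
  simpa using (isInvariantCoeffs_of_forall_act_eq_zero hs).eq_zero hγ

theorem tw_act (a : (Γ × ℤ) →₀ F) (x : ((Γ × ℤ) →₀ F) ⊗[F] ((Γ × ℤ) →₀ F)) :
    tw Γ (act Γ a x) = act Γ a (tw Γ x) := by
  induction x using TensorProduct.induction_on with
  | zero => simp
  | tmul y z =>
    simp only [act, tw, LinearMap.add_apply, LinearMap.rTensor_tmul, LinearMap.lTensor_tmul,
      map_add, LinearEquiv.coe_coe, TensorProduct.comm_tmul]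
    exact add_comm _ _
  | add x y hx hy => simp only [map_add, hx, hy]

theorem act_add_tw_eq_zero {a : (Γ × ℤ) →₀ F} {r : ((Γ × ℤ) →₀ F) ⊗[F] ((Γ × ℤ) →₀ F)}
    (hr : act Γ a r ∈ antiSym Γ) : act Γ a (r + tw Γ r) = 0 := by
  obtain ⟨w, hw⟩ := hr
  rw [map_add, ← tw_act, ← hw, map_sub, tw, LinearEquiv.coe_coe, comm_comm,
    sub_add_sub_cancel, sub_self]

end

/-- if `a·r ∈ Im(1⊗1 − τ)` for all `a ∈ L`, then `r ∈ Im(1⊗1 − τ)`. -/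
theorem invariantly_antisymmetric_is_antisymmetric
    {F : Type*} [Field F] [CharZero F] (Γ : AddSubgroup F) (h1 : (1 : F) ∈ Γ)
    (r : ((Γ × ℤ) →₀ F) ⊗[F] ((Γ × ℤ) →₀ F))
    (hr : ∀ a : (Γ × ℤ) →₀ F,
      act Γ a r ∈ antiSym Γ) :
    r ∈ antiSym Γ := by
  have hΓ : Γ ≠ ⊥ := fun h => one_ne_zero (AddSubgroup.mem_bot.mp (h ▸ h1))
  have hsym : r + tw Γ r = 0 :=
    eq_zero_of_forall_act_eq_zero hΓ fun a => act_add_tw_eq_zero (hr a)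
  refine ⟨(2 : F)⁻¹ • r, ?_⟩
  change (2 : F)⁻¹ • r - tw Γ ((2 : F)⁻¹ • r) = r
  have htw : tw Γ r = 0 - r := by rw [← hsym]; abel
  rw [map_smul, htw]
  module
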